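/- arXiv:math-ph/0007006 — 2 statements merged into one kernel-verified Lean document; each statement's English description precedes it below -/
import Mathlib

section
/- Suppose λ is real (so β = 0 and λ = α). Then Im(u'(z)·conj(u(z))) < 0 for every nonzero z with −π/6 ≤ arg z ≤ 7π/6 and z ∉ A₁; in other words, Im(u'·conj u) is strictly negative on the closed angular region {r·e^{iθ} : r > 0, −π/6 ≤ θ ≤ 7π/6} with the region A₁ removed. -/
open Complex Real Filter Topology ComplexConjugate

/-!
Put `W = u' · conj u` and `q z = i z³ - λ`, so that `u'' = q u`. Along a horizontal line
`t ↦ t + iy` one finds `d/dt W = q |u|² + |u'|²`, so for real `λ` we get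
`d/dt Im W = (t³ - 3ty²) |u|²`; along a vertical line `s ↦ x + is`,
`d/ds Im W = Re q · |u|² - |u'|²`.

Since `W → 0` at both ends of every horizontal line, `Im W < 0` wherever `3y² ≤ x²`: `Im W` is
monotone on the ray towards the nearer end, and strictly so because `u` cannot vanish on an
interval. The same argument for `Re W` on the real axis gives `Re λ ≥ 0`. Then `Re q ≤ 0` on the
whole vertical segment below a point of the upper half plane outside `A₁`, so `Im W` there is at
most its (negative) value on the real axis. The rest of the sector `-π/6 ≤ arg z ≤ 7π/6` lies in
`3y² ≤ x²`.
-/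

noncomputable def derivMulConj (u : ℂ → ℂ) (z : ℂ) : ℂ := deriv u z * conj (u z)

theorem HasDerivAt.re {f : ℝ → ℂ} {f' : ℂ} {t : ℝ} (h : HasDerivAt f f' t) :
    HasDerivAt (fun s => (f s).re) f'.re t :=
  reCLM.hasFDerivAt.comp_hasDerivAt t h

theorem HasDerivAt.im {f : ℝ → ℂ} {f' : ℂ} {t : ℝ} (h : HasDerivAt f f' t) :
    HasDerivAt (fun s => (f s).im) f'.im t :=
  imCLM.hasFDerivAt.comp_hasDerivAt t h

theorem neg_of_hasDerivAt_of_tendsto_atTop {F D : ℝ → ℝ} {a : ℝ}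
    (hF : ∀ t, HasDerivAt F (D t) t) (hD : ∀ t, a < t → 0 ≤ D t)
    (hpos : ∃ t, a < t ∧ 0 < D t) (hlim : Tendsto F atTop (𝓝 0)) : F a < 0 := by
  have hmono : MonotoneOn F (Set.Ici a) :=
    monotoneOn_of_hasDerivWithinAt_nonneg (convex_Ici a)
      (fun t _ => (hF t).continuousAt.continuousWithinAt)
      (fun t _ => (hF t).hasDerivWithinAt) (fun t ht => hD t (by simpa using ht))
  have hle : ∀ t, a ≤ t → F t ≤ 0 := fun t ht =>
    ge_of_tendsto hlim ((eventually_ge_atTop t).mono fun s hs => hmono ht (ht.trans hs) hs)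
  obtain ⟨t, hat, hDt⟩ := hpos
  -- otherwise `F` vanishes on `[a, ∞)`, which forces `D t = 0`
  by_contra! h0
  have hzero : F =ᶠ[𝓝 t] fun _ => 0 := by
    filter_upwards [Ioi_mem_nhds hat] with s hs
    exact le_antisymm (hle s hs.le) (h0.trans (hmono Set.self_mem_Ici (Set.mem_Ici.2 hs.le) hs.le))
  exact hDt.ne' ((hF t).unique ((hasDerivAt_const t 0).congr_of_eventuallyEq hzero))

theorem neg_of_hasDerivAt_of_tendsto_atBot {F D : ℝ → ℝ} {a : ℝ}
    (hF : ∀ t, HasDerivAt F (D t) t) (hD : ∀ t, t < a → D t ≤ 0)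
    (hneg : ∃ t, t < a ∧ D t < 0) (hlim : Tendsto F atBot (𝓝 0)) : F a < 0 := by
  obtain ⟨t, hta, hDt⟩ := hneg
  simpa using neg_of_hasDerivAt_of_tendsto_atTop (F := fun s => F (-s)) (D := fun s => -D (-s))
    (a := -a) (fun s => by simpa [Function.comp_def] using (hF (-s)).comp s (hasDerivAt_neg s))
    (fun s hs => by simpa using hD (-s) (by linarith)) ⟨-t, by linarith, by simpa using hDt⟩
    (hlim.comp tendsto_neg_atTop_atBot)

section

variable {u q : ℂ → ℂ}

theorem hasDerivAt_derivMulConj_comp (hu : Differentiable ℂ u)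
    (hode : ∀ w, deriv (deriv u) w = q w * u w) {p : ℝ → ℂ} {c : ℂ} {t : ℝ}
    (hp : HasDerivAt p c t) :
    HasDerivAt (fun s => derivMulConj u (p s))
      (c * q (p t) * normSq (u (p t)) + conj c * normSq (deriv u (p t))) t := by
  have hderiv := (hu.deriv (p t)).hasDerivAt.comp t hp
  have hval := (hu (p t)).hasDerivAt.comp t hp
  refine (hderiv.mul hval.star).congr_deriv ?_
  simp only [Function.comp_apply, hode, ← mul_conj, star_def, map_mul]
  ring

theorem hasDerivAt_derivMulConj_horizontal (hu : Differentiable ℂ u)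
    (hode : ∀ w, deriv (deriv u) w = q w * u w) (y t : ℝ) :
    HasDerivAt (fun s : ℝ => derivMulConj u (s + y * I))
      (q (t + y * I) * normSq (u (t + y * I)) + normSq (deriv u (t + y * I))) t := by
  simpa using hasDerivAt_derivMulConj_comp hu hode
    ((hasDerivAt_id (t : ℂ)).comp_ofReal.add_const (y * I))

theorem hasDerivAt_derivMulConj_vertical (hu : Differentiable ℂ u)
    (hode : ∀ w, deriv (deriv u) w = q w * u w) (x t : ℝ) :
    HasDerivAt (fun s : ℝ => derivMulConj u (x + s * I))
      (I * q (x + t * I) * normSq (u (x + t * I)) - I * normSq (deriv u (x + t * I))) t := by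
  have hp : HasDerivAt (fun s : ℝ => (x : ℂ) + s * I) I t := by
    simpa using (((hasDerivAt_id (t : ℂ)).comp_ofReal).mul_const I).const_add (x : ℂ)
  simpa [sub_eq_add_neg] using hasDerivAt_derivMulConj_comp hu hode hp

theorem antitoneOn_im_derivMulConj_vertical (hu : Differentiable ℂ u)
    (hode : ∀ w, deriv (deriv u) w = q w * u w) {x : ℝ} {s : Set ℝ} (hs : Convex ℝ s)
    (hq : ∀ t ∈ s, (q (x + t * I)).re ≤ 0) :
    AntitoneOn (fun t : ℝ => (derivMulConj u (x + t * I)).im) s := by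
  have hH (t : ℝ) := (hasDerivAt_derivMulConj_vertical hu hode x t).im
  refine antitoneOn_of_hasDerivWithinAt_nonpos hs
    (fun t _ => (hH t).continuousAt.continuousWithinAt) (fun t _ => (hH t).hasDerivWithinAt)
    fun t ht => ?_
  have hqt := hq t (interior_subset ht)
  simp only [sub_im, mul_im, I_re, I_im, ofReal_re, ofReal_im]
  nlinarith [normSq_nonneg (u (x + t * I)), normSq_nonneg (deriv u (x + t * I))]

theorem exists_ne_zero_on_horizontal_line (hu : Differentiable ℂ u) (hu_ne : u ≠ 0) (y : ℝ)
    {U : Set ℝ} (hU : IsOpen U) (hne : U.Nonempty) : ∃ t ∈ U, u (t + y * I) ≠ 0 := by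
  obtain ⟨c, hc⟩ := hne
  by_contra! h
  have hline : Tendsto (fun t : ℝ => (t : ℂ) + y * I) (𝓝[≠] c) (𝓝[≠] (c + y * I)) := by
    refine tendsto_nhdsWithin_of_tendsto_nhds_of_eventually_within _ ?_ ?_
    · exact ((by fun_prop : Continuous fun t : ℝ => (t : ℂ) + y * I).tendsto c).mono_left
        nhdsWithin_le_nhds
    · filter_upwards [self_mem_nhdsWithin] with t ht
      simpa using ht
  have hfreq : ∃ᶠ z in 𝓝[≠] ((c : ℂ) + y * I), u z = 0 :=
    hline.frequently (eventually_nhdsWithin_of_eventually_nhds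
      (eventually_of_mem (hU.mem_nhds hc) h)).frequently
  exact hu_ne (funext fun z => ((analyticOnNhd_univ_iff_differentiable.2 hu)
    |>.eqOn_zero_of_preconnected_of_frequently_eq_zero isPreconnected_univ (Set.mem_univ _)
      hfreq) (Set.mem_univ z))

theorem tendsto_derivMulConj_cocompact
    (hdecay : ∀ M : ℝ, 0 < M → ∃ C₁ > (0 : ℝ), ∃ C₂ > (0 : ℝ), ∀ x y : ℝ, |y| ≤ M →
      ‖u (x + y * I)‖ + ‖deriv u (x + y * I)‖ ≤ C₁ * Real.exp (-(|x| ^ C₂)))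
    (y : ℝ) : Tendsto (fun t : ℝ => derivMulConj u (t + y * I)) (cocompact ℝ) (𝓝 0) := by
  obtain ⟨C₁, -, C₂, hC₂, hbound⟩ := hdecay (|y| + 1) (by positivity)
  have hexp : Tendsto (fun t : ℝ => C₁ * Real.exp (-(|t| ^ C₂))) (cocompact ℝ) (𝓝 0) := by
    simpa using (Real.tendsto_exp_atBot.comp (tendsto_neg_atTop_atBot.comp
      ((tendsto_rpow_atTop hC₂).comp (tendsto_norm_cocompact_atTop (E := ℝ))))).const_mul C₁
  have hb (t : ℝ) := hbound t y (by linarith)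
  have hu0 : Tendsto (fun t : ℝ => u (t + y * I)) (cocompact ℝ) (𝓝 0) :=
    squeeze_zero_norm (fun t => by linarith [hb t, norm_nonneg (deriv u (t + y * I))]) hexp
  have hu'0 : Tendsto (fun t : ℝ => deriv u (t + y * I)) (cocompact ℝ) (𝓝 0) :=
    squeeze_zero_norm (fun t => by linarith [hb t, norm_nonneg (u (t + y * I))]) hexp
  simpa [derivMulConj] using hu'0.mul ((continuous_conj.tendsto 0).comp hu0)

end

theorem re_I_mul_cube_sub (lam : ℂ) (x y : ℝ) :
    (I * ((x : ℂ) + y * I) ^ 3 - lam).re = y ^ 3 - 3 * x ^ 2 * y - lam.re := by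
  simp [pow_succ, mul_re, mul_im]
  ring

theorem im_I_mul_cube_sub (lam : ℂ) (x y : ℝ) :
    (I * ((x : ℂ) + y * I) ^ 3 - lam).im = x ^ 3 - 3 * x * y ^ 2 - lam.im := by
  simp [pow_succ, mul_re, mul_im]
  ring

theorem re_I_mul_cube_sub_nonpos_of_le {lam : ℂ} (hlam : 0 ≤ lam.re) {x y s : ℝ}
    (hs₀ : 0 ≤ s) (hsy : s ≤ y) (hy : (I * ((x : ℂ) + y * I) ^ 3 - lam).re ≤ 0) :
    (I * ((x : ℂ) + s * I) ^ 3 - lam).re ≤ 0 := by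
  -- `s ↦ s³ - 3x²s - Re λ` is convex on `[0, ∞)` and nonpositive at `0` and at `y`
  rw [re_I_mul_cube_sub] at hy ⊢
  rcases le_or_gt (s ^ 2) (3 * x ^ 2) with h | h
  · nlinarith [mul_nonneg hs₀ (sub_nonneg.2 h)]
  · nlinarith [mul_nonneg (sub_nonneg.2 hsy)
      (by nlinarith [mul_nonneg hs₀ (hs₀.trans hsy)] : (0 : ℝ) ≤ y ^ 2 + y * s + s ^ 2 - 3 * x ^ 2)]

theorem neg_half_le_sin {θ : ℝ} (h₁ : -(π / 6) ≤ θ) (h₂ : θ ≤ 7 * π / 6) :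
    -(1 / 2) ≤ Real.sin θ := by
  have key := Real.sin_sub_sin θ (-(π / 6))
  rw [Real.sin_neg, Real.sin_pi_div_six] at key
  have hs : 0 ≤ Real.sin ((θ - -(π / 6)) / 2) :=
    Real.sin_nonneg_of_nonneg_of_le_pi (by linarith) (by linarith [Real.pi_pos])
  have hc : 0 ≤ Real.cos ((θ + -(π / 6)) / 2) :=
    Real.cos_nonneg_of_mem_Icc ⟨by linarith [Real.pi_pos], by linarith⟩
  nlinarith [mul_nonneg hs hc]

section

variable {lam : ℂ} {u : ℂ → ℂ}

theorem re_nonneg_of_tendsto_derivMulConj (hu : Differentiable ℂ u) (hu_ne : u ≠ 0)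
    (hode : ∀ w, deriv (deriv u) w = (I * w ^ 3 - lam) * u w)
    (hlim : ∀ y : ℝ, Tendsto (fun t : ℝ => derivMulConj u (t + y * I)) (cocompact ℝ) (𝓝 0)) :
    0 ≤ lam.re := by
  by_contra! hneg
  let G : ℝ → ℝ := fun t => (derivMulConj u (t + (0 : ℝ) * I)).re
  let D : ℝ → ℝ := fun t =>
    -lam.re * normSq (u (t + (0 : ℝ) * I)) + normSq (deriv u (t + (0 : ℝ) * I))
  have hG (t : ℝ) : HasDerivAt G (D t) t :=
    (hasDerivAt_derivMulConj_horizontal hu hode 0 t).re.congr_deriv (by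
      simp only [add_re, mul_re, ofReal_re, ofReal_im, mul_zero, sub_zero, re_I_mul_cube_sub, D]
      ring)
  have hD (t : ℝ) : 0 ≤ D t := by
    nlinarith [normSq_nonneg (u (t + (0 : ℝ) * I)), normSq_nonneg (deriv u (t + (0 : ℝ) * I))]
  have hGlim (l : Filter ℝ) (hl : l ≤ cocompact ℝ) : Tendsto G l (𝓝 0) := by
    have := (continuous_re.tendsto 0).comp ((hlim 0).mono_left hl)
    rwa [zero_re] at this
  obtain ⟨t, ht, hut⟩ :=
    exists_ne_zero_on_horizontal_line hu hu_ne 0 isOpen_Ioi (Set.nonempty_Ioi (a := 0))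
  have hGneg : G 0 < 0 := neg_of_hasDerivAt_of_tendsto_atTop hG (fun t _ => hD t)
    ⟨t, ht, by nlinarith [normSq_pos.2 hut, normSq_nonneg (deriv u (t + (0 : ℝ) * I))]⟩
    (hGlim _ atTop_le_cocompact)
  have hGnonneg : 0 ≤ G 0 :=
    (monotone_of_hasDerivAt_nonneg hG hD).le_of_tendsto (hGlim _ atBot_le_cocompact) 0
  linarith

theorem im_derivMulConj_neg_of_three_sq_le (hlam : lam.im = 0) (hu : Differentiable ℂ u)
    (hu_ne : u ≠ 0) (hode : ∀ w, deriv (deriv u) w = (I * w ^ 3 - lam) * u w)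
    (hlim : ∀ y : ℝ, Tendsto (fun t : ℝ => derivMulConj u (t + y * I)) (cocompact ℝ) (𝓝 0))
    {x y : ℝ} (hxy : 3 * y ^ 2 ≤ x ^ 2) : (derivMulConj u (x + y * I)).im < 0 := by
  let F : ℝ → ℝ := fun t => (derivMulConj u (t + y * I)).im
  have hF (t : ℝ) : HasDerivAt F ((t ^ 3 - 3 * t * y ^ 2) * normSq (u (t + y * I))) t :=
    (hasDerivAt_derivMulConj_horizontal hu hode y t).im.congr_deriv (by
      simp only [add_im, mul_im, ofReal_re, ofReal_im, mul_zero, add_zero, im_I_mul_cube_sub,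
        hlam, sub_zero, zero_add])
  have hFlim (l : Filter ℝ) (hl : l ≤ cocompact ℝ) : Tendsto F l (𝓝 0) := by
    have := (continuous_im.tendsto 0).comp ((hlim y).mono_left hl)
    rwa [zero_im] at this
  rcases le_total 0 x with hx | hx
  · have hcubic (t : ℝ) (ht : x < t) : 0 < t ^ 3 - 3 * t * y ^ 2 := by
      nlinarith [mul_pos (hx.trans_lt ht) (by nlinarith : 0 < t ^ 2 - 3 * y ^ 2)]
    obtain ⟨t, ht, hut⟩ :=
      exists_ne_zero_on_horizontal_line hu hu_ne y isOpen_Ioi (Set.nonempty_Ioi (a := x))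
    exact neg_of_hasDerivAt_of_tendsto_atTop (a := x) hF
      (fun t ht => mul_nonneg (hcubic t ht).le (normSq_nonneg _))
      ⟨t, ht, mul_pos (hcubic t ht) (normSq_pos.2 hut)⟩ (hFlim _ atTop_le_cocompact)
  · have hcubic (t : ℝ) (ht : t < x) : t ^ 3 - 3 * t * y ^ 2 < 0 := by
      nlinarith [mul_pos (by linarith : 0 < -t) (by nlinarith : 0 < t ^ 2 - 3 * y ^ 2)]
    obtain ⟨t, ht, hut⟩ :=
      exists_ne_zero_on_horizontal_line hu hu_ne y isOpen_Iio (Set.nonempty_Iio (a := x))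
    exact neg_of_hasDerivAt_of_tendsto_atBot (a := x) hF
      (fun t ht => mul_nonpos_of_nonpos_of_nonneg (hcubic t ht).le (normSq_nonneg _))
      ⟨t, ht, mul_neg_of_neg_of_pos (hcubic t ht) (normSq_pos.2 hut)⟩ (hFlim _ atBot_le_cocompact)

theorem im_derivMulConj_le_of_re_nonpos (hu : Differentiable ℂ u)
    (hode : ∀ w, deriv (deriv u) w = (I * w ^ 3 - lam) * u w) (hlam : 0 ≤ lam.re) {x y : ℝ}
    (hy : 0 ≤ y) (hq : (I * ((x : ℂ) + y * I) ^ 3 - lam).re ≤ 0) :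
    (derivMulConj u (x + y * I)).im ≤ (derivMulConj u (x + (0 : ℝ) * I)).im :=
  antitoneOn_im_derivMulConj_vertical (q := fun w => I * w ^ 3 - lam) hu hode (convex_Icc 0 y)
    (fun _ hs => re_I_mul_cube_sub_nonpos_of_le hlam hs.1 hs.2 hq) ⟨le_rfl, hy⟩ ⟨hy, le_rfl⟩ hy

end

/-- Let `u` be an eigenfunction of the cubic PT-symmetric oscillator
`-u'' - (iz)³u = lam·u` and suppose the eigenvalue `lam` is real.  Then
`Im(u'(z)·conj(u(z))) < 0` for every nonzero `z = r·e^{iθ}` with `r > 0` and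
`-π/6 ≤ θ ≤ 7π/6` which does not lie in `A₁ = {z : Re(iz³-lam) > 0, Im z > 0}`. -/
theorem im_wronskian_neg_region_real_eigenvalue
    (lam : ℂ) (u : ℂ → ℂ)
    (hbeta : lam.im = 0)
    (hu_entire : Differentiable ℂ u)
    (hu_ne : u ≠ 0)
    (hode : ∀ w : ℂ, iteratedDeriv 2 u w = (Complex.I * w ^ 3 - lam) * u w)
    (hdecay : ∀ M : ℝ, 0 < M → ∃ C₁ > (0 : ℝ), ∃ C₂ > (0 : ℝ), ∀ x y : ℝ, |y| ≤ M →
      ‖u (x + y * Complex.I)‖ + ‖deriv u (x + y * Complex.I)‖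
        ≤ C₁ * Real.exp (-(|x| ^ C₂))) :
    ∀ r θ : ℝ, 0 < r → -(π / 6) ≤ θ → θ ≤ 7 * π / 6 →
      (r * Complex.exp (θ * Complex.I)) ∉
        {v : ℂ | 0 < (Complex.I * v ^ 3 - lam).re ∧ 0 < v.im} →
      (deriv u (r * Complex.exp (θ * Complex.I))
        * conj (u (r * Complex.exp (θ * Complex.I)))).im < 0 := by
  intro r θ hr hθ₁ hθ₂ hA
  have hode' (w : ℂ) : deriv (deriv u) w = (I * w ^ 3 - lam) * u w := by
    simpa [iteratedDeriv_succ] using hode w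
  have hlim := tendsto_derivMulConj_cocompact hdecay
  have hz : (r : ℂ) * exp (θ * I) = ↑(r * Real.cos θ) + ↑(r * Real.sin θ) * I := by
    rw [exp_mul_I, ← ofReal_cos, ← ofReal_sin]
    push_cast
    ring
  rw [hz] at hA ⊢
  change (derivMulConj u _).im < 0
  rcases le_or_gt (Real.sin θ) 0 with hsin | hsin
  · have hsq : 3 * Real.sin θ ^ 2 ≤ Real.cos θ ^ 2 := by
      nlinarith [neg_half_le_sin hθ₁ hθ₂, Real.sin_sq_add_cos_sq θ]
    refine im_derivMulConj_neg_of_three_sq_le hbeta hu_entire hu_ne hode' hlim ?_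
    nlinarith [mul_le_mul_of_nonneg_left hsq (sq_nonneg r)]
  · have hy : 0 < r * Real.sin θ := mul_pos hr hsin
    have hq : (I * (((r * Real.cos θ : ℝ) : ℂ) + (r * Real.sin θ : ℝ) * I) ^ 3 - lam).re ≤ 0 :=
      not_lt.1 fun h => hA ⟨h, by simpa only [add_im, ofReal_im, mul_im, ofReal_re, I_re, I_im,
        mul_zero, mul_one, zero_add, add_zero] using hy⟩
    have hbase := im_derivMulConj_neg_of_three_sq_le hbeta hu_entire hu_ne hode' hlim
      (x := r * Real.cos θ) (y := 0) (by simpa using sq_nonneg (r * Real.cos θ))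
    exact (im_derivMulConj_le_of_re_nonpos hu_entire hode'
      (re_nonneg_of_tendsto_derivMulConj hu_entire hu_ne hode' hlim) hy.le hq).trans_lt hbase
end

section
/- Let p(x,y) be a polynomial in two real variables such that for every y ∈ ℝ the integral over x ∈ ℝ of p(x,y)·|u(x+iy)|² dx equals 0. Then the polynomial q(x,y) := ∂p/∂y(x,y) + 2·(x³ − 3xy² − β)·∫₀ˣ p(t,y) dt also satisfies: for every y ∈ ℝ, the integral over x ∈ ℝ of q(x,y)·|u(x+iy)|² dx equals 0. -/
/-!
Write `N(x, s) = ‖u (x + s i)‖²` and `J = ∂ₛ N = 2 ⟪u, i u'⟫`. Differentiating the hypothesis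
in `s` gives `∫ (∂ₛ p · N + p · J) dx = 0`. The equation `u'' = V u`, `V z = i z³ - λ`, gives
`∂ₓ J = -2 Im V · N = 2 (β - Re z³) N`, so with `A = ∫₀ˣ p` the function `A · J` has derivative
`p · J - 2 (Re z³ - β) A N`, whose integral vanishes. Subtracting the two identities leaves
`∫ q N = 0`. Both steps (differentiating under the integral sign and discarding the boundary terms
of `A · J`) are justified because `u` and `u'` decay like `exp (-|x| ^ c)` on horizontal strips,
which beats the polynomial growth of `p`, `∂ₛ p`, `A` and `Im V`.
-/

open Complex Real ComplexConjugate MeasureTheory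
open Filter Topology Asymptotics MvPolynomial
open scoped InnerProductSpace

theorem tendsto_one_add_pow_mul_exp_neg_rpow_atTop (n : ℕ) {c : ℝ} (hc : 0 < c) :
    Tendsto (fun r : ℝ => (1 + r) ^ n * exp (-r ^ c)) atTop (𝓝 0) := by
  have key : Tendsto (fun r : ℝ => 2 ^ n * ((r ^ c) ^ ((n : ℝ) / c) * exp (-1 * r ^ c)))
      atTop (𝓝 0) := by
    simpa using ((tendsto_rpow_mul_exp_neg_mul_atTop_nhds_zero _ 1 one_pos).comp
      (tendsto_rpow_atTop hc)).const_mul (2 ^ n)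
  refine squeeze_zero' ?_ ?_ key
  · filter_upwards [eventually_ge_atTop 0] with r hr
    positivity
  · filter_upwards [eventually_ge_atTop 1] with r hr
    have hr0 : 0 ≤ r := by linarith
    rw [← rpow_mul hr0, mul_div_cancel₀ _ hc.ne', rpow_natCast, neg_one_mul, ← mul_assoc,
      ← mul_pow]
    gcongr
    linarith

theorem tendsto_one_add_abs_pow_mul_exp_neg_rpow_cocompact (n : ℕ) {c : ℝ} (hc : 0 < c) :
    Tendsto (fun x : ℝ => (1 + |x|) ^ n * exp (-|x| ^ c)) (cocompact ℝ) (𝓝 0) :=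
  (tendsto_one_add_pow_mul_exp_neg_rpow_atTop n hc).comp tendsto_norm_cocompact_atTop

theorem continuous_one_add_abs_pow_mul_exp_neg_rpow (n : ℕ) {c : ℝ} (hc : 0 < c) :
    Continuous fun x : ℝ => (1 + |x|) ^ n * exp (-|x| ^ c) := by
  have : Continuous fun x : ℝ => |x| ^ c := continuous_abs.rpow_const fun _ => Or.inr hc.le
  fun_prop

/-- Compare with `(1 + |x|) ^ (-2)`, which is integrable on `ℝ`. -/
theorem integrable_one_add_abs_pow_mul_exp_neg_rpow (n : ℕ) {c : ℝ} (hc : 0 < c) :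
    Integrable fun x : ℝ => (1 + |x|) ^ n * exp (-|x| ^ c) := by
  refine LocallyIntegrable.integrable_of_isBigO_cocompact
    (continuous_one_add_abs_pow_mul_exp_neg_rpow n hc).locallyIntegrable ?_
    ((integrable_one_add_norm (E := ℝ) (r := 2) (by norm_num)).integrableAtFilter _)
  refine (((tendsto_one_add_abs_pow_mul_exp_neg_rpow_cocompact (n + 2) hc).isBigO_one ℝ).mul
    (isBigO_refl (fun x : ℝ => (1 + ‖x‖) ^ (-2 : ℝ)) _)).congr (fun x => ?_) fun x => one_mul _
  have hx : 0 < 1 + |x| := by positivity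
  rw [Real.norm_eq_abs, mul_right_comm, ← rpow_natCast, ← rpow_add hx]
  norm_num

def PolyGrowthOn (S : Set ℝ) (f : ℝ → ℝ → ℝ) : Prop :=
  ∃ C : ℝ, ∃ n : ℕ, 0 ≤ C ∧ ∀ x, ∀ s ∈ S, |f x s| ≤ C * (1 + |x|) ^ n

def StretchedExpDecayOn (c : ℝ) (S : Set ℝ) (f : ℝ → ℝ → ℝ) : Prop :=
  ∃ C : ℝ, ∃ n : ℕ, 0 ≤ C ∧ ∀ x, ∀ s ∈ S, |f x s| ≤ C * ((1 + |x|) ^ n * exp (-|x| ^ c))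

section Growth

variable {S : Set ℝ} {c : ℝ} {f g : ℝ → ℝ → ℝ}

theorem one_le_one_add_abs (x : ℝ) : 1 ≤ 1 + |x| := le_add_of_nonneg_right (abs_nonneg x)

theorem PolyGrowthOn.const (a : ℝ) : PolyGrowthOn S fun _ _ => a :=
  ⟨|a|, 0, abs_nonneg a, fun x s _ => by simp⟩

theorem polyGrowthOn_fst : PolyGrowthOn S fun x _ => x :=
  ⟨1, 1, zero_le_one, fun x s _ => by simp⟩

theorem polyGrowthOn_snd {R : ℝ} (hS : ∀ s ∈ S, |s| ≤ R) : PolyGrowthOn S fun _ s => s :=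
  ⟨|R|, 0, abs_nonneg R, fun x s hs => by simpa using (hS s hs).trans (le_abs_self R)⟩

theorem PolyGrowthOn.add (hf : PolyGrowthOn S f) (hg : PolyGrowthOn S g) :
    PolyGrowthOn S fun x s => f x s + g x s := by
  obtain ⟨C, n, hC, hfC⟩ := hf
  obtain ⟨D, m, hD, hgD⟩ := hg
  refine ⟨C + D, n + m, add_nonneg hC hD, fun x s hs => ?_⟩
  have hn := pow_le_pow_right₀ (one_le_one_add_abs x) (n.le_add_right m)
  have hm := pow_le_pow_right₀ (one_le_one_add_abs x) (m.le_add_left n)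
  calc |f x s + g x s| ≤ |f x s| + |g x s| := abs_add_le _ _
    _ ≤ C * (1 + |x|) ^ n + D * (1 + |x|) ^ m := add_le_add (hfC x s hs) (hgD x s hs)
    _ ≤ (C + D) * (1 + |x|) ^ (n + m) := by nlinarith

theorem PolyGrowthOn.mul (hf : PolyGrowthOn S f) (hg : PolyGrowthOn S g) :
    PolyGrowthOn S fun x s => f x s * g x s := by
  obtain ⟨C, n, hC, hfC⟩ := hf
  obtain ⟨D, m, hD, hgD⟩ := hg
  refine ⟨C * D, n + m, mul_nonneg hC hD, fun x s hs => ?_⟩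
  calc |f x s * g x s| = |f x s| * |g x s| := abs_mul _ _
    _ ≤ C * (1 + |x|) ^ n * (D * (1 + |x|) ^ m) :=
      mul_le_mul (hfC x s hs) (hgD x s hs) (abs_nonneg _) (by positivity)
    _ = C * D * (1 + |x|) ^ (n + m) := by ring

theorem PolyGrowthOn.intervalIntegral (hf : PolyGrowthOn S f) :
    PolyGrowthOn S fun x s => ∫ t in (0 : ℝ)..x, f t s := by
  obtain ⟨C, n, hC, hfC⟩ := hf
  refine ⟨C, n + 1, hC, fun x s hs => ?_⟩
  have hbound : ∀ t ∈ Set.uIoc 0 x, ‖f t s‖ ≤ C * (1 + |x|) ^ n := fun t ht => by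
    have htx : |t| ≤ |x| := by
      simpa using Set.abs_sub_left_of_mem_uIcc (Set.uIoc_subset_uIcc ht)
    exact (hfC t s hs).trans (by gcongr)
  calc |∫ t in (0 : ℝ)..x, f t s| ≤ C * (1 + |x|) ^ n * |x - 0| :=
        intervalIntegral.norm_integral_le_of_norm_le_const hbound
    _ ≤ C * (1 + |x|) ^ n * (1 + |x|) := by gcongr; simp
    _ = C * (1 + |x|) ^ (n + 1) := by ring

theorem PolyGrowthOn.mul_stretchedExpDecayOn (hf : PolyGrowthOn S f)
    (hg : StretchedExpDecayOn c S g) : StretchedExpDecayOn c S fun x s => f x s * g x s := by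
  obtain ⟨C, n, hC, hfC⟩ := hf
  obtain ⟨D, m, hD, hgD⟩ := hg
  refine ⟨C * D, n + m, mul_nonneg hC hD, fun x s hs => ?_⟩
  calc |f x s * g x s| = |f x s| * |g x s| := abs_mul _ _
    _ ≤ C * (1 + |x|) ^ n * (D * ((1 + |x|) ^ m * exp (-|x| ^ c))) :=
      mul_le_mul (hfC x s hs) (hgD x s hs) (abs_nonneg _) (by positivity)
    _ = C * D * ((1 + |x|) ^ (n + m) * exp (-|x| ^ c)) := by ring

theorem StretchedExpDecayOn.add (hf : StretchedExpDecayOn c S f)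
    (hg : StretchedExpDecayOn c S g) : StretchedExpDecayOn c S fun x s => f x s + g x s := by
  obtain ⟨C, n, hC, hfC⟩ := hf
  obtain ⟨D, m, hD, hgD⟩ := hg
  refine ⟨C + D, n + m, add_nonneg hC hD, fun x s hs => ?_⟩
  have hn := pow_le_pow_right₀ (one_le_one_add_abs x) (n.le_add_right m)
  have hm := pow_le_pow_right₀ (one_le_one_add_abs x) (m.le_add_left n)
  have he := (exp_pos (-|x| ^ c)).le
  calc |f x s + g x s| ≤ |f x s| + |g x s| := abs_add_le _ _
    _ ≤ C * ((1 + |x|) ^ n * exp (-|x| ^ c)) + D * ((1 + |x|) ^ m * exp (-|x| ^ c)) :=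
      add_le_add (hfC x s hs) (hgD x s hs)
    _ ≤ (C + D) * ((1 + |x|) ^ (n + m) * exp (-|x| ^ c)) := by
      have := mul_le_mul_of_nonneg_right hn he
      have := mul_le_mul_of_nonneg_right hm he
      nlinarith

theorem stretchedExpDecayOn_inner {E : Type*} [NormedAddCommGroup E] [InnerProductSpace ℝ E]
    {F G : ℝ → ℝ → E} {C : ℝ} (hF : ∀ x, ∀ s ∈ S, ‖F x s‖ ≤ C * exp (-|x| ^ c))
    (hG : ∀ x, ∀ s ∈ S, ‖G x s‖ ≤ C * exp (-|x| ^ c)) :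
    StretchedExpDecayOn c S fun x s => ⟪F x s, G x s⟫_ℝ := by
  refine ⟨C ^ 2, 0, sq_nonneg C, fun x s hs => ?_⟩
  have he : exp (-|x| ^ c) ≤ 1 := exp_le_one_iff.mpr (neg_nonpos.mpr (by positivity))
  have hFC := hF x s hs
  calc |⟪F x s, G x s⟫_ℝ| ≤ ‖F x s‖ * ‖G x s‖ := abs_real_inner_le_norm _ _
    _ ≤ C * exp (-|x| ^ c) * (C * exp (-|x| ^ c)) :=
      mul_le_mul hFC (hG x s hs) (norm_nonneg _) ((norm_nonneg _).trans hFC)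
    _ = C ^ 2 * exp (-|x| ^ c) * exp (-|x| ^ c) := by ring
    _ ≤ C ^ 2 * exp (-|x| ^ c) * 1 := by gcongr
    _ = C ^ 2 * ((1 + |x|) ^ 0 * exp (-|x| ^ c)) := by ring

theorem StretchedExpDecayOn.integrable (hf : StretchedExpDecayOn c S f) (hc : 0 < c) {s : ℝ}
    (hs : s ∈ S) (hcont : Continuous (f · s)) : Integrable (f · s) := by
  obtain ⟨C, n, -, hfC⟩ := hf
  exact ((integrable_one_add_abs_pow_mul_exp_neg_rpow n hc).const_mul C).mono'
    hcont.aestronglyMeasurable (ae_of_all _ fun x => hfC x s hs)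

theorem StretchedExpDecayOn.tendsto_cocompact (hf : StretchedExpDecayOn c S f) (hc : 0 < c)
    {s : ℝ} (hs : s ∈ S) : Tendsto (f · s) (cocompact ℝ) (𝓝 0) := by
  obtain ⟨C, n, -, hfC⟩ := hf
  have h := (tendsto_one_add_abs_pow_mul_exp_neg_rpow_cocompact n hc).const_mul C
  rw [mul_zero] at h
  exact squeeze_zero_norm (fun x => hfC x s hs) h

end Growth

namespace MvPolynomial

theorem polyGrowthOn_eval {S : Set ℝ} {R : ℝ} (hS : ∀ s ∈ S, |s| ≤ R)
    (P : MvPolynomial (Fin 2) ℝ) : PolyGrowthOn S fun x s => eval ![x, s] P := by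
  induction P using MvPolynomial.induction_on with
  | C a => simpa using PolyGrowthOn.const a
  | add P Q hP hQ => simpa using hP.add hQ
  | mul_X P i hP =>
    fin_cases i
    · simpa using hP.mul polyGrowthOn_fst
    · simpa using hP.mul (polyGrowthOn_snd hS)

theorem continuous_eval_fst (P : MvPolynomial (Fin 2) ℝ) (s : ℝ) :
    Continuous fun x : ℝ => eval ![x, s] P :=
  (continuous_eval P).comp (by fun_prop)

theorem hasDerivAt_eval_snd (P : MvPolynomial (Fin 2) ℝ) (x s : ℝ) :
    HasDerivAt (fun s => eval ![x, s] P) (eval ![x, s] (pderiv 1 P)) s := by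
  induction P using MvPolynomial.induction_on with
  | C a => simpa using hasDerivAt_const s a
  | add P Q hP hQ => simpa only [map_add] using hP.fun_add hQ
  | mul_X P i hP =>
    fin_cases i
    · simpa [pderiv_X, mul_comm] using hP.mul_const x
    · simpa [pderiv_X, add_comm, mul_comm] using hP.fun_mul (hasDerivAt_id' s)

end MvPolynomial

theorem integral_eq_zero_of_hasDerivAt_of_forall_integral_eq_zero {F F' : ℝ → ℝ → ℝ}
    {S : Set ℝ} {c y : ℝ} (hc : 0 < c) (hS : S ∈ 𝓝 y) (hF : StretchedExpDecayOn c S F)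
    (hF' : StretchedExpDecayOn c S F') (hF_cont : ∀ s, Continuous (F · s))
    (hF'_cont : Continuous (F' · y)) (hderiv : ∀ x, ∀ s ∈ S, HasDerivAt (F x) (F' x s) s)
    (hzero : ∀ s, ∫ x, F x s = 0) : ∫ x, F' x y = 0 := by
  obtain ⟨C, n, -, hF'C⟩ := hF'
  have h := hasDerivAt_integral_of_dominated_loc_of_deriv_le (F := fun s x => F x s)
    (bound := fun x => C * ((1 + |x|) ^ n * exp (-|x| ^ c))) hS
    (Eventually.of_forall fun s => (hF_cont s).aestronglyMeasurable)
    (hF.integrable hc (mem_of_mem_nhds hS) (hF_cont y)) hF'_cont.aestronglyMeasurable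
    (ae_of_all _ hF'C) ((integrable_one_add_abs_pow_mul_exp_neg_rpow n hc).const_mul C)
    (ae_of_all _ hderiv)
  simp only [hzero] at h
  exact h.2.unique (hasDerivAt_const y 0)

theorem integral_eq_zero_of_hasDerivAt_of_stretchedExpDecayOn {H H' : ℝ → ℝ → ℝ} {S : Set ℝ}
    {c y : ℝ} (hc : 0 < c) (hy : y ∈ S) (hH : StretchedExpDecayOn c S H)
    (hH' : StretchedExpDecayOn c S H') (hH'_cont : Continuous (H' · y))
    (hderiv : ∀ x, HasDerivAt (H · y) (H' x y) x) : ∫ x, H' x y = 0 := by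
  have h := hH.tendsto_cocompact hc hy
  simpa using integral_of_hasDerivAt_of_tendsto hderiv (hH'.integrable hc hy hH'_cont)
    (h.mono_left atBot_le_cocompact) (h.mono_left atTop_le_cocompact)

noncomputable def planeNormSq (u : ℂ → ℂ) (x s : ℝ) : ℝ := ‖u (x + s * I)‖ ^ 2

/-- `∂ₛ ‖u (x + s i)‖²`, by the Cauchy–Riemann equations. -/
noncomputable def planeCurrent (u : ℂ → ℂ) (x s : ℝ) : ℝ :=
  2 * ⟪u (x + s * I), I * deriv u (x + s * I)⟫_ℝ

section Eigenfunction

variable {u : ℂ → ℂ} {S : Set ℝ} {C c : ℝ}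

theorem hasDerivAt_horizontal {f : ℂ → ℂ} (hf : Differentiable ℂ f) (x y : ℝ) :
    HasDerivAt (fun t : ℝ => f (t + y * I)) (deriv f (x + y * I)) x := by
  have h := (hf _).hasDerivAt.comp (x : ℂ) ((hasDerivAt_id (x : ℂ)).add_const (y * I))
  simpa using h.comp_ofReal

theorem hasDerivAt_vertical {f : ℂ → ℂ} (hf : Differentiable ℂ f) (x y : ℝ) :
    HasDerivAt (fun s : ℝ => f (x + s * I)) (I * deriv f (x + y * I)) y := by
  have h := (hf _).hasDerivAt.comp (y : ℂ)
    (((hasDerivAt_id (y : ℂ)).mul_const I).const_add (x : ℂ))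
  simpa [mul_comm] using h.comp_ofReal

theorem hasDerivAt_planeNormSq_snd (hu : Differentiable ℂ u) (x s : ℝ) :
    HasDerivAt (planeNormSq u x) (planeCurrent u x s) s :=
  (hasDerivAt_vertical hu x s).norm_sq

/-- The term `⟪u', i u'⟫` of the derivative vanishes, and `⟪u, i V u⟫ = -Im V · ‖u‖²`. -/
theorem hasDerivAt_planeCurrent_fst {V : ℂ → ℂ} (hu : Differentiable ℂ u)
    (hV : ∀ z, deriv (deriv u) z = V z * u z) (x y : ℝ) :
    HasDerivAt (planeCurrent u · y) (-2 * (V (x + y * I)).im * planeNormSq u x y) x := by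
  refine (((hasDerivAt_horizontal hu x y).inner ℝ
    ((hasDerivAt_horizontal hu.deriv x y).const_mul I)).const_mul 2).congr_deriv ?_
  rw [hV, Complex.inner, Complex.inner, planeNormSq, Complex.sq_norm, Complex.normSq_apply]
  simp only [Complex.mul_re, Complex.mul_im, Complex.conj_re, Complex.conj_im, Complex.I_re,
    Complex.I_im]
  ring

theorem continuous_planeNormSq (hu : Differentiable ℂ u) (s : ℝ) :
    Continuous (planeNormSq u · s) :=
  (hu.continuous.comp (by fun_prop)).norm.pow 2

theorem continuous_planeCurrent (hu : Differentiable ℂ u) (s : ℝ) :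
    Continuous (planeCurrent u · s) :=
  continuous_const.mul ((hu.continuous.comp (by fun_prop)).inner
    (continuous_const.mul (hu.deriv.continuous.comp (by fun_prop))))

theorem stretchedExpDecayOn_planeNormSq (hdec : ∀ x : ℝ, ∀ s ∈ S,
      ‖u (x + s * I)‖ + ‖deriv u (x + s * I)‖ ≤ C * exp (-|x| ^ c)) :
    StretchedExpDecayOn c S (planeNormSq u) := by
  have hu : ∀ x : ℝ, ∀ s ∈ S, ‖u (x + s * I)‖ ≤ C * exp (-|x| ^ c) := fun x s hs =>
    le_of_add_le_of_nonneg_left (hdec x s hs) (norm_nonneg _)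
  have h := stretchedExpDecayOn_inner hu hu
  simp only [real_inner_self_eq_norm_sq] at h
  exact h

theorem stretchedExpDecayOn_planeCurrent (hdec : ∀ x : ℝ, ∀ s ∈ S,
      ‖u (x + s * I)‖ + ‖deriv u (x + s * I)‖ ≤ C * exp (-|x| ^ c)) :
    StretchedExpDecayOn c S (planeCurrent u) := by
  have hu : ∀ x : ℝ, ∀ s ∈ S, ‖u (x + s * I)‖ ≤ C * exp (-|x| ^ c) := fun x s hs =>
    le_of_add_le_of_nonneg_left (hdec x s hs) (norm_nonneg _)
  have hIu' : ∀ x : ℝ, ∀ s ∈ S, ‖I * deriv u (x + s * I)‖ ≤ C * exp (-|x| ^ c) := fun x s hs => by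
    rw [norm_mul, norm_I, one_mul]
    exact le_of_add_le_of_nonneg_right (hdec x s hs) (norm_nonneg _)
  exact (PolyGrowthOn.const 2).mul_stretchedExpDecayOn (stretchedExpDecayOn_inner hu hIu')

theorem integral_eval_pderiv_mul_planeNormSq_add_eq_zero {R y : ℝ} (hu : Differentiable ℂ u)
    (hc : 0 < c) (hy : |y| < R) (hdec : ∀ x : ℝ, ∀ s ∈ Metric.closedBall (0 : ℝ) R,
      ‖u (x + s * I)‖ + ‖deriv u (x + s * I)‖ ≤ C * exp (-|x| ^ c))
    (P : MvPolynomial (Fin 2) ℝ) (horth : ∀ s, ∫ x, eval ![x, s] P * planeNormSq u x s = 0) :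
    Integrable (fun x => eval ![x, y] (pderiv 1 P) * planeNormSq u x y
        + eval ![x, y] P * planeCurrent u x y) ∧
      ∫ x, (eval ![x, y] (pderiv 1 P) * planeNormSq u x y
        + eval ![x, y] P * planeCurrent u x y) = 0 := by
  have hS : ∀ s ∈ Metric.closedBall (0 : ℝ) R, |s| ≤ R := fun s => mem_closedBall_zero_iff.1
  have hN := stretchedExpDecayOn_planeNormSq hdec
  have hdecay := ((polyGrowthOn_eval hS (pderiv 1 P)).mul_stretchedExpDecayOn hN).add
    ((polyGrowthOn_eval hS P).mul_stretchedExpDecayOn (stretchedExpDecayOn_planeCurrent hdec))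
  have hcont : Continuous fun x => eval ![x, y] (pderiv 1 P) * planeNormSq u x y
      + eval ![x, y] P * planeCurrent u x y :=
    ((continuous_eval_fst _ y).mul (continuous_planeNormSq hu y)).add
      ((continuous_eval_fst P y).mul (continuous_planeCurrent hu y))
  have hyS : y ∈ Metric.closedBall (0 : ℝ) R := mem_closedBall_zero_iff.2 hy.le
  refine ⟨hdecay.integrable hc hyS hcont, ?_⟩
  exact integral_eq_zero_of_hasDerivAt_of_forall_integral_eq_zero hc
    (Metric.closedBall_mem_nhds_of_mem (mem_ball_zero_iff.2 hy))
    ((polyGrowthOn_eval hS P).mul_stretchedExpDecayOn hN) hdecay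
    (fun s => (continuous_eval_fst P s).mul (continuous_planeNormSq hu s)) hcont
    (fun x s _ => (hasDerivAt_eval_snd P x s).mul (hasDerivAt_planeNormSq_snd hu x s)) horth

theorem integral_eval_mul_planeCurrent_add_eq_zero {V : ℂ → ℂ} {R y : ℝ} (hu : Differentiable ℂ u)
    (hV : ∀ z, deriv (deriv u) z = V z * u z) (hV_cont : Continuous V)
    (hV_growth : PolyGrowthOn (Metric.closedBall 0 R) fun x s => (V (x + s * I)).im)
    (hc : 0 < c) (hy : |y| ≤ R) (hdec : ∀ x : ℝ, ∀ s ∈ Metric.closedBall (0 : ℝ) R,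
      ‖u (x + s * I)‖ + ‖deriv u (x + s * I)‖ ≤ C * exp (-|x| ^ c))
    (P : MvPolynomial (Fin 2) ℝ) :
    Integrable (fun x => eval ![x, y] P * planeCurrent u x y
        + (∫ t in (0 : ℝ)..x, eval ![t, y] P) * (-2 * (V (x + y * I)).im * planeNormSq u x y)) ∧
      ∫ x, (eval ![x, y] P * planeCurrent u x y
        + (∫ t in (0 : ℝ)..x, eval ![t, y] P) * (-2 * (V (x + y * I)).im * planeNormSq u x y))
        = 0 := by
  have hS : ∀ s ∈ Metric.closedBall (0 : ℝ) R, |s| ≤ R := fun s => mem_closedBall_zero_iff.1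
  have hyS : y ∈ Metric.closedBall (0 : ℝ) R := mem_closedBall_zero_iff.2 hy
  have hG := stretchedExpDecayOn_planeCurrent hdec
  have hA := (polyGrowthOn_eval hS P).intervalIntegral
  have hA_deriv : ∀ x, HasDerivAt (fun x => ∫ t in (0 : ℝ)..x, eval ![t, y] P)
      (eval ![x, y] P) x := fun x =>
    ((continuous_eval_fst P y).integral_hasStrictDerivAt 0 x).hasDerivAt
  have hdecay := ((polyGrowthOn_eval hS P).mul_stretchedExpDecayOn hG).add
    (hA.mul_stretchedExpDecayOn (((PolyGrowthOn.const (-2)).mul hV_growth).mul_stretchedExpDecayOn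
      (stretchedExpDecayOn_planeNormSq hdec)))
  have hcont : Continuous fun x => eval ![x, y] P * planeCurrent u x y
      + (∫ t in (0 : ℝ)..x, eval ![t, y] P) * (-2 * (V (x + y * I)).im * planeNormSq u x y) :=
    ((continuous_eval_fst P y).mul (continuous_planeCurrent hu y)).add
      ((continuous_iff_continuousAt.2 fun x => (hA_deriv x).continuousAt).mul
        ((continuous_const.mul (Complex.continuous_im.comp (hV_cont.comp (by fun_prop)))).mul
          (continuous_planeNormSq hu y)))
  refine ⟨hdecay.integrable hc hyS hcont, ?_⟩
  exact integral_eq_zero_of_hasDerivAt_of_stretchedExpDecayOn hc hyS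
    (hA.mul_stretchedExpDecayOn hG) hdecay hcont
    fun x => (hA_deriv x).mul (hasDerivAt_planeCurrent_fst hu hV x y)

end Eigenfunction

theorem re_ofReal_add_mul_I_pow_three (x y : ℝ) :
    (((x : ℂ) + y * I) ^ 3).re = x ^ 3 - 3 * x * y ^ 2 := by
  simp [pow_succ, Complex.mul_re, Complex.mul_im]
  ring

theorem orthogonality_closed_under_y_derivative_operation_general
    (lam : ℂ) (u : ℂ → ℂ)
    (hu_entire : Differentiable ℂ u)
    (hode : ∀ w : ℂ, iteratedDeriv 2 u w = (Complex.I * w ^ 3 - lam) * u w)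
    (hdecay : ∀ M : ℝ, 0 < M → ∃ C₁ > (0 : ℝ), ∃ C₂ > (0 : ℝ), ∀ x y : ℝ, |y| ≤ M →
      ‖u (x + y * Complex.I)‖ + ‖deriv u (x + y * Complex.I)‖
        ≤ C₁ * Real.exp (-(|x| ^ C₂)))
    (p : ℝ → ℝ → ℝ)
    (hp : ∃ P : MvPolynomial (Fin 2) ℝ, ∀ x y : ℝ,
      p x y = MvPolynomial.eval ![x, y] P)
    (horth : ∀ y : ℝ,
      ∫ x : ℝ, p x y * ‖u (x + y * Complex.I)‖ ^ 2 = 0) :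
    ∀ y : ℝ,
      ∫ x : ℝ,
        (deriv (fun s : ℝ => p x s) y
          + 2 * (x ^ 3 - 3 * x * y ^ 2 - lam.im) * ∫ t in (0 : ℝ)..x, p t y)
        * ‖u (x + y * Complex.I)‖ ^ 2 = 0 := by
  intro y
  obtain ⟨P, hP⟩ := hp
  obtain rfl : p = fun x s => eval ![x, s] P := funext₂ hP
  obtain ⟨C, -, c, hc, hdec⟩ := hdecay (|y| + 1) (by positivity)
  replace hdec : ∀ x : ℝ, ∀ s ∈ Metric.closedBall (0 : ℝ) (|y| + 1), _ :=
    fun x s hs => hdec x s (mem_closedBall_zero_iff.1 hs)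
  have hV : ∀ z, deriv (deriv u) z = (I * z ^ 3 - lam) * u z := fun z => by
    simpa [iteratedDeriv_succ] using hode z
  have hV_growth : PolyGrowthOn (Metric.closedBall 0 (|y| + 1))
      fun x s => (I * ((x : ℂ) + s * I) ^ 3 - lam).im := by
    convert polyGrowthOn_eval (fun s => mem_closedBall_zero_iff.1)
      (X 0 ^ 3 - 3 * X 0 * X 1 ^ 2 - .C lam.im) using 3
    simp [re_ofReal_add_mul_I_pow_three]
  obtain ⟨hint_vert, hvert⟩ := integral_eval_pderiv_mul_planeNormSq_add_eq_zero hu_entire hc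
    (lt_add_one |y|) hdec P horth
  obtain ⟨hint_horiz, hhoriz⟩ := integral_eval_mul_planeCurrent_add_eq_zero hu_entire hV
    (by fun_prop) hV_growth hc (le_add_of_nonneg_right zero_le_one) hdec P
  refine (integral_congr_ae (ae_of_all _ fun x => ?_)).trans
    ((integral_sub hint_vert hint_horiz).trans (by rw [hvert, hhoriz, sub_zero]))
  simp only [planeNormSq, (hasDerivAt_eval_snd P x y).deriv, Complex.mul_im, Complex.I_re,
    Complex.I_im, Complex.sub_im, re_ofReal_add_mul_I_pow_three]
  ring

/-- Let `u` be an eigenfunction of the cubic PT-symmetric oscillator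
`-u'' - (iz)³u = lam·u` with eigenvalue `lam = α + iβ`.  If `p(x,y)` is a polynomial
in two real variables with `∫_ℝ p(x,y)·|u(x+iy)|² dx = 0` for every `y`, then the
polynomial `q(x,y) = ∂p/∂y(x,y) + 2(x³ - 3xy² - β)·∫₀ˣ p(t,y) dt` also satisfies
`∫_ℝ q(x,y)·|u(x+iy)|² dx = 0` for every `y`. -/
theorem orthogonality_closed_under_y_derivative_operation
    (lam : ℂ) (u : ℂ → ℂ)
    (hu_entire : Differentiable ℂ u)
    (hu_ne : u ≠ 0)
    (hode : ∀ w : ℂ, iteratedDeriv 2 u w = (Complex.I * w ^ 3 - lam) * u w)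
    (hdecay : ∀ M : ℝ, 0 < M → ∃ C₁ > (0 : ℝ), ∃ C₂ > (0 : ℝ), ∀ x y : ℝ, |y| ≤ M →
      ‖u (x + y * Complex.I)‖ + ‖deriv u (x + y * Complex.I)‖
        ≤ C₁ * Real.exp (-(|x| ^ C₂)))
    (p : ℝ → ℝ → ℝ)
    (hp : ∃ P : MvPolynomial (Fin 2) ℝ, ∀ x y : ℝ,
      p x y = MvPolynomial.eval ![x, y] P)
    (horth : ∀ y : ℝ,
      ∫ x : ℝ, p x y * ‖u (x + y * Complex.I)‖ ^ 2 = 0) :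
    ∀ y : ℝ,
      ∫ x : ℝ,
        (deriv (fun s : ℝ => p x s) y
          + 2 * (x ^ 3 - 3 * x * y ^ 2 - lam.im) * ∫ t in (0 : ℝ)..x, p t y)
        * ‖u (x + y * Complex.I)‖ ^ 2 = 0 :=
  orthogonality_closed_under_y_derivative_operation_general lam u hu_entire hode hdecay p hp horth
end
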